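/- Let R be a commutative noetherian local ring and M a finitely generated R-module. Then ⋂_{m>0, N ∈ mod(R)} ann_R(Ext_R^m(M,N)) = ann_R(Ext_R^1(M, ΩM)) = ann_R(stableHom_R(M,M)), where ΩM is the first syzygy of M in a minimal free resolution and stableHom_R(M,M) = Hom_R(M,M)/P_R(M,M) with P_R(M,M) the submodule of endomorphisms factoring through a projective module. -/

import Mathlib

open CategoryTheory IsLocalRing

universe u

variable (R : Type u) [CommRing R]

/-- The submodule of `Hom_R(M,N)` consisting of maps factoring through a projective module. -/
def projStable (M N : Type u) [AddCommGroup M] [Module R M] [AddCommGroup N] [Module R N] :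
    Submodule R (M →ₗ[R] N) where
  carrier := {f | ∃ (P : Type u) (_ : AddCommGroup P) (_ : Module R P)
    (_ : Module.Projective R P) (g : M →ₗ[R] P) (h : P →ₗ[R] N), f = h.comp g}
  zero_mem' := ⟨PUnit, inferInstance, inferInstance, inferInstance, 0, 0, by ext x; simp⟩
  add_mem' := by
    rintro f f' ⟨P, _, _, _, g, h, rfl⟩ ⟨P', _, _, _, g', h', rfl⟩
    exact ⟨P × P', inferInstance, inferInstance, inferInstance, g.prod g',
      h.comp (LinearMap.fst R P P') + h'.comp (LinearMap.snd R P P'), by ext x; simp⟩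
  smul_mem' := by
    rintro r f ⟨P, _, _, _, g, h, rfl⟩
    exact ⟨P, inferInstance, inferInstance, inferInstance, g, r • h, by ext x; simp⟩

/-- The stable hom module `Hom_R(M,N)/P_R(M,N)`. -/
def stableHom (M N : Type u) [AddCommGroup M] [Module R M] [AddCommGroup N] [Module R N] :=
  (M →ₗ[R] N) ⧸ projStable R M N

noncomputable instance (M N : Type u) [AddCommGroup M] [Module R M] [AddCommGroup N]
    [Module R N] : AddCommGroup (stableHom R M N) :=
  inferInstanceAs (AddCommGroup ((M →ₗ[R] N) ⧸ projStable R M N))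

noncomputable instance (M N : Type u) [AddCommGroup M] [Module R M] [AddCommGroup N]
    [Module R N] : Module R (stableHom R M N) :=
  inferInstanceAs (Module R ((M →ₗ[R] N) ⧸ projStable R M N))

/-- `Ann(M)`: the annihilator of the stable endomorphism module of `M`. -/
noncomputable def stAnn (M : Type u) [AddCommGroup M] [Module R M] : Ideal R :=
  Module.annihilator R (stableHom R M M)

/-- `Ext_R^n(M,N)` as an `R`-module. -/
noncomputable abbrev ExtM (n : ℕ) (M : ModuleCat.{u} R) (N : ModuleCat.{u} R) :
    ModuleCat.{u} R :=
  ((Ext R (ModuleCat.{u} R) n).obj (Opposite.op M)).obj N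

/-- `ca^n(R)`, the `n`-th cohomology annihilator ideal. -/
noncomputable def ca (n : ℕ) : Ideal R :=
  ⨅ (m : ℕ) (_ : n ≤ m) (M : ModuleCat.{u} R) (N : ModuleCat.{u} R)
    (_ : Module.Finite R M) (_ : Module.Finite R N),
    Module.annihilator R (ExtM R m M N)

/-!
If `r • 𝟙 M` factors through a projective `Q`, then `r • 𝟙` on a projective resolution of `M`
is homotopic to a chain map vanishing in positive degrees (a lift of `r • 𝟙 M` through `Q`
concentrated in degree 0), so `r` kills every `Ext^{m+1}(M, -)`. Conversely, let `r` kill `Ext^1(M, ΩM)`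
with `ΩM = ker (π : Rⁿ → M)`: the cocycle `P₁ → ΩM` comparing a resolution `P` with `π` is then
`r`-times a coboundary, and correcting `r • (P₀ → Rⁿ)` by that coboundary gives a map vanishing
on `P₁`, i.e. a map `h : M → Rⁿ` with `π ∘ h = r • 𝟙 M`. So all three ideals consist of the
`r` for which `r • 𝟙 M` factors through a projective.
-/

open CategoryTheory Limits

instance HomologicalComplex.single_linear {R : Type*} [Ring R] {C : Type*} [Category C]
    [Preadditive C] [HasZeroObject C] [Linear R C] {ι : Type*} [DecidableEq ι]
    (c : ComplexShape ι) (j : ι) : Functor.Linear R (HomologicalComplex.single C c j) where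
  map_smul f r := by
    ext
    simp [HomologicalComplex.single_map_f_self]

theorem CategoryTheory.ShortComplex.mem_annihilator_moduleCat_homology_iff {R : Type*} [Ring R]
    (S : ShortComplex (ModuleCat R)) (r : R) :
    r ∈ Module.annihilator R S.homology ↔ ∀ x : S.X₂, S.g x = 0 → ∃ t, S.f t = r • x := by
  rw [S.moduleCatHomologyIso.toLinearEquiv.annihilator_eq, Module.mem_annihilator]
  change (∀ z : LinearMap.ker S.g.hom ⧸ LinearMap.range S.moduleCatToCycles, r • z = 0) ↔ _
  simp only [Submodule.Quotient.forall, ← Submodule.Quotient.mk_smul,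
    Submodule.Quotient.mk_eq_zero, Subtype.forall, LinearMap.mem_range, Subtype.ext_iff,
    LinearMap.mem_ker]
  rfl

namespace CategoryTheory

variable {R : Type*} [Ring R] {C : Type*} [Category C] [Abelian C] [Linear R C]
  [EnoughProjectives C] {X : C}

theorem ProjectiveResolution.mem_annihilator_ext_succ_iff (P : ProjectiveResolution X) (n : ℕ)
    (Y : C) (r : R) :
    r ∈ Module.annihilator R (((Ext R C (n + 1)).obj (Opposite.op X)).obj Y) ↔
      ∀ f : P.complex.X (n + 1) ⟶ Y, P.complex.d (n + 2) (n + 1) ≫ f = 0 →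
        ∃ t : P.complex.X n ⟶ Y, P.complex.d (n + 1) n ≫ t = r • f := by
  rw [(P.isoExt (n + 1) Y ≪≫ ShortComplex.homologyMapIso
      ((P.complex.linearYonedaObj R Y).isoSc' n (n + 1) (n + 2) (by simp) (by simp))
      ).toLinearEquiv.annihilator_eq, ShortComplex.mem_annihilator_moduleCat_homology_iff]
  rfl

open ProjectiveResolution in
theorem mem_annihilator_ext_succ_of_comp_eq_smul_id {r : R} {Q : C} [Projective Q] (g : X ⟶ Q)
    (h : Q ⟶ X) (hgh : g ≫ h = r • 𝟙 X) (n : ℕ) (Y : C) :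
    r ∈ Module.annihilator R (((Ext R C (n + 1)).obj (Opposite.op X)).obj Y) := by
  let P := ProjectiveResolution.of X
  let s : P.complex ⟶ P.complex := lift g P (self Q) ≫ lift h (self Q) P
  have hs : s ≫ P.π = P.π ≫ (ChainComplex.single₀ C).map (r • 𝟙 X) := by
    simp only [s, Category.assoc, lift_commutes, lift_commutes_assoc, ← Functor.map_comp, hgh]
  have hsmul : (r • 𝟙 P.complex) ≫ P.π = P.π ≫ (ChainComplex.single₀ C).map (r • 𝟙 X) := by
    rw [Functor.map_smul, Functor.map_id, Linear.smul_comp, Linear.comp_smul, Category.id_comp,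
      Category.comp_id]
  have hs_succ : s.f (n + 1) = 0 := by
    rw [HomologicalComplex.comp_f, ((HomologicalComplex.isZero_single_obj_X _ 0 Q (n + 1)
      (by simp)).eq_zero_of_tgt ((lift g P (self Q)).f (n + 1)))]
    exact zero_comp
  have χ := liftHomotopy (r • 𝟙 X) _ _ hsmul hs
  have hχ := χ.comm (n + 1)
  rw [dNext_eq χ.hom (show (ComplexShape.down ℕ).Rel (n + 1) n by simp),
    prevD_eq χ.hom (show (ComplexShape.down ℕ).Rel (n + 2) (n + 1) by simp), hs_succ, add_zero,
    HomologicalComplex.smul_f_apply, HomologicalComplex.id_f] at hχ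
  refine (P.mem_annihilator_ext_succ_iff n Y r).2 fun f hf => ⟨χ.hom n (n + 1) ≫ f, ?_⟩
  calc P.complex.d (n + 1) n ≫ χ.hom n (n + 1) ≫ f
      = (r • 𝟙 _) ≫ f := by
        rw [hχ, Preadditive.add_comp, Category.assoc, Category.assoc, hf, comp_zero, add_zero]
    _ = r • f := by rw [Linear.smul_comp, Category.id_comp]

theorem exists_comp_eq_smul_id_of_mem_annihilator_ext_one {r : R} {F K : C} [Projective F]
    (p : F ⟶ X) [Epi p] (ι : K ⟶ F) (w : ι ≫ p = 0) (hK : IsLimit (KernelFork.ofι ι w))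
    (hr : r ∈ Module.annihilator R (((Ext R C 1).obj (Opposite.op X)).obj K)) :
    ∃ h : X ⟶ F, h ≫ p = r • 𝟙 X := by
  let P := ProjectiveResolution.of X
  let π₀ : P.complex.X 0 ⟶ X := P.π.f 0
  have : Epi π₀ := P.instEpiFNatπ 0
  have hπ₀ : P.complex.d 1 0 ≫ π₀ = 0 := P.complex_d_comp_π_f_zero
  let α : P.complex.X 0 ⟶ F := Projective.factorThru π₀ p
  have hα : α ≫ p = π₀ := Projective.factorThru_comp _ _
  obtain ⟨q, hq : q ≫ ι = P.complex.d 1 0 ≫ α⟩ :=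
    KernelFork.IsLimit.lift' hK (P.complex.d 1 0 ≫ α) (by rw [Category.assoc, hα, hπ₀])
  have hq_cocycle : P.complex.d 2 1 ≫ q = 0 :=
    Fork.IsLimit.hom_ext hK (by simp [hq])
  obtain ⟨t, ht : P.complex.d 1 0 ≫ t = r • q⟩ :=
    (P.mem_annihilator_ext_succ_iff 0 K r).1 hr q hq_cocycle
  let σ : P.complex.X 0 ⟶ F := r • α - t ≫ ι
  have hσ : P.complex.d 1 0 ≫ σ = 0 := by
    simp [σ, ← hq, reassoc_of% ht]
  obtain ⟨h, hh⟩ : ∃ h : X ⟶ F, π₀ ≫ h = σ :=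
    ⟨_, (CokernelCofork.IsColimit.desc' P.isColimitCokernelCofork σ hσ).2⟩
  refine ⟨h, (cancel_epi π₀).1 ?_⟩
  rw [reassoc_of% hh]
  simp [σ, hα, w]

end CategoryTheory

theorem comp_mem_projStable {M N N' : Type u} [AddCommGroup M] [Module R M] [AddCommGroup N]
    [Module R N] [AddCommGroup N'] [Module R N'] (f : N →ₗ[R] N') {g : M →ₗ[R] N}
    (hg : g ∈ projStable R M N) : f ∘ₗ g ∈ projStable R M N' := by
  obtain ⟨P, _, _, _, a, b, rfl⟩ := hg
  exact ⟨P, _, _, ‹_›, a, f ∘ₗ b, rfl⟩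

section

variable {R} {M : Type u} [AddCommGroup M] [Module R M]

theorem mem_annihilator_stableHom_iff {r : R} :
    r ∈ Module.annihilator R (stableHom R M M) ↔ r • LinearMap.id ∈ projStable R M M := by
  rw [Module.mem_annihilator]
  change (∀ z : (M →ₗ[R] M) ⧸ projStable R M M, r • z = 0) ↔ _
  simp only [Submodule.Quotient.forall, ← Submodule.Quotient.mk_smul,
    Submodule.Quotient.mk_eq_zero]
  refine ⟨fun h => h LinearMap.id, fun h f => ?_⟩
  simpa [LinearMap.comp_smul] using comp_mem_projStable R f h

theorem mem_annihilator_stableHom_of_mem_annihilator_ext_one_ker {F : Type u} [AddCommGroup F]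
    [Module R F] [Module.Projective R F] {π : F →ₗ[R] M} (hπ : Function.Surjective π) {r : R}
    (hr : r ∈ Module.annihilator R
      (ExtM R 1 (ModuleCat.of R M) (ModuleCat.of R (LinearMap.ker π)))) :
    r ∈ Module.annihilator R (stableHom R M M) := by
  have : Epi (ModuleCat.ofHom π) := (ModuleCat.epi_iff_surjective _).2 hπ
  have : Projective (ModuleCat.of R F) := (IsProjective.iff_projective _).1 inferInstance
  obtain ⟨h, hh⟩ := exists_comp_eq_smul_id_of_mem_annihilator_ext_one (ModuleCat.ofHom π) _
    (ModuleCat.kernelCone _).condition (ModuleCat.kernelIsLimit (ModuleCat.ofHom π)) hr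
  rw [mem_annihilator_stableHom_iff]
  exact ⟨F, inferInstance, inferInstance, inferInstance, h.hom, π,
    congrArg ModuleCat.Hom.hom hh.symm⟩

theorem mem_annihilator_ext_of_mem_annihilator_stableHom {r : R}
    (hr : r ∈ Module.annihilator R (stableHom R M M)) {m : ℕ} (hm : 0 < m) (N : ModuleCat.{u} R) :
    r ∈ Module.annihilator R (ExtM R m (ModuleCat.of R M) N) := by
  obtain ⟨P, _, _, hP, g, h, hgh⟩ := mem_annihilator_stableHom_iff.1 hr
  have : Projective (ModuleCat.of R P) := (IsProjective.iff_projective P).1 hP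
  obtain ⟨m, rfl⟩ : ∃ k, m = k + 1 := ⟨m - 1, by omega⟩
  exact mem_annihilator_ext_succ_of_comp_eq_smul_id (ModuleCat.ofHom g) (ModuleCat.ofHom h)
    (ModuleCat.hom_ext hgh.symm) m N

end

theorem stmt1 [IsNoetherianRing R]
    (M : Type u) [AddCommGroup M] [Module R M]
    (n : ℕ) (π : (Fin n → R) →ₗ[R] M) (hsurj : Function.Surjective π) :
    (⨅ (m : ℕ) (_ : 0 < m) (N : ModuleCat.{u} R) (_ : Module.Finite R N),
        Module.annihilator R (ExtM R m (ModuleCat.of R M) N))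
      = Module.annihilator R
          (ExtM R 1 (ModuleCat.of R M) (ModuleCat.of R (LinearMap.ker π))) ∧
    Module.annihilator R
        (ExtM R 1 (ModuleCat.of R M) (ModuleCat.of R (LinearMap.ker π)))
      = Module.annihilator R (stableHom R M M) := by
  set L := ⨅ (m : ℕ) (_ : 0 < m) (N : ModuleCat.{u} R) (_ : Module.Finite R N),
    Module.annihilator R (ExtM R m (ModuleCat.of R M) N)
  set A := Module.annihilator R (ExtM R 1 (ModuleCat.of R M) (ModuleCat.of R (LinearMap.ker π)))
  set B := Module.annihilator R (stableHom R M M)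
  have hLA : L ≤ A :=
    iInf₂_le_of_le 1 one_pos (iInf₂_le (ModuleCat.of R (LinearMap.ker π))
      (inferInstance : Module.Finite R (LinearMap.ker π)))
  have hAB : A ≤ B := fun _ => mem_annihilator_stableHom_of_mem_annihilator_ext_one_ker hsurj
  have hBL : B ≤ L := fun _ hr => by
    simp only [L, Ideal.mem_iInf]
    exact fun m hm N _ => mem_annihilator_ext_of_mem_annihilator_stableHom hr hm N
  exact ⟨hLA.antisymm (hAB.trans hBL), hAB.antisymm (hBL.trans hLA)⟩
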